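/- arXiv:1512.01018 — 3 statements merged into one kernel-verified Lean document; each statement's English description precedes it below -/
import Mathlib

section
/- Let L be a finite-dimensional Lie algebra over a field F and let I be a perfect subideal of L (that is, I² = I). Then I is a characteristic ideal of L; in particular, I is an ideal of L. -/
/-! A perfect `I` is spanned by brackets `⁅a, b⁆` with `a, b ∈ I`, and a derivation sends such a
bracket to `⁅a, D b⁆ + ⁅D a, b⁆`; so `D` preserves `I` as soon as `D` maps `I` into a subalgebra
normalizing `I`. Applied to `ad x` for `x` in the next term of the subideal chain, this shows by
induction that every term of the chain normalizes `I`. Hence `L` normalizes `I`, and then the same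
argument applies to any derivation of `L`. -/

namespace Paper

open LieAlgebra

section AlgDefs

variable (F : Type*) [Field F] (L : Type*) [LieRing L] [LieAlgebra F L]

/-- The nilradical of a Lie algebra: the largest nilpotent ideal (the sup of nilpotent ideals). -/
noncomputable def nilrad : LieIdeal F L :=
  sSup {I : LieIdeal F L | LieRing.IsNilpotent I}

/-- The nilpotency class of a Lie algebra. -/
noncomputable def nilClass : ℕ := sInf {k | LieModule.lowerCentralSeries F L L k = ⊥}

/-- A Lie algebra is nilregular if the field has characteristic zero, or characteristic `p > 0`
and its nilradical has nilpotency class less than `p - 1`. -/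
noncomputable def Nilregular : Prop :=
  ringChar F = 0 ∨ nilClass F (nilrad F L) < ringChar F - 1

/-- A Lie algebra is solregular if the field has characteristic zero, or characteristic `p > 0`
and its radical has derived length less than `log₂ p`. -/
noncomputable def Solregular : Prop :=
  ringChar F = 0 ∨ 2 ^ LieAlgebra.derivedLength F (LieAlgebra.radical F L) < ringChar F

/-- Regular means nilregular or solregular. -/
noncomputable def Regular : Prop := Nilregular F L ∨ Solregular F L

end AlgDefs

section IdealDefs

variable {F : Type*} [Field F] {L : Type*} [LieRing L] [LieAlgebra F L]

/-- The centraliser `C_L(I)` of an ideal `I`, as an ideal of `L`. -/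
def centralizer (I : LieIdeal F L) : LieIdeal F L where
  carrier := {x : L | ∀ y ∈ I, ⁅x, y⁆ = 0}
  zero_mem' := by intro y hy; simp
  add_mem' := by intro a b ha hb y hy; rw [add_lie, ha y hy, hb y hy, add_zero]
  smul_mem' := by intro c x hx y hy; rw [smul_lie, hx y hy, smul_zero]
  lie_mem := by
    intro x m hm y hy
    have h1 : ⁅x, ⁅m, y⁆⁆ = (0 : L) := by rw [hm y hy, lie_zero]
    have h2 : ⁅m, ⁅x, y⁆⁆ = (0 : L) := hm _ (I.lie_mem hy)
    show ⁅⁅x, m⁆, y⁆ = (0 : L)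
    rw [lie_lie, h1, h2, sub_zero]

/-- The centre `Z(I)` of an ideal `I`, as an ideal of `L`. -/
def idealCenter (I : LieIdeal F L) : LieIdeal F L where
  carrier := {x : L | x ∈ I ∧ ∀ y ∈ I, ⁅x, y⁆ = 0}
  zero_mem' := ⟨I.zero_mem, by intro y hy; simp⟩
  add_mem' := by
    intro a b ha hb
    exact ⟨I.add_mem ha.1 hb.1, fun y hy => by rw [add_lie, ha.2 y hy, hb.2 y hy, add_zero]⟩
  smul_mem' := by
    intro c x hx
    exact ⟨I.smul_mem c hx.1, fun y hy => by rw [smul_lie, hx.2 y hy, smul_zero]⟩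
  lie_mem := by
    intro x m hm
    refine ⟨I.lie_mem hm.1, fun y hy => ?_⟩
    have h1 : ⁅x, ⁅m, y⁆⁆ = (0 : L) := by rw [hm.2 y hy, lie_zero]
    have h2 : ⁅m, ⁅x, y⁆⁆ = (0 : L) := hm.2 _ (I.lie_mem hy)
    show ⁅⁅x, m⁆, y⁆ = (0 : L)
    rw [lie_lie, h1, h2, sub_zero]

/-- The centraliser `C_L(A/B)` of a chief factor, as an ideal of `L`. -/
def chiefCentralizer (A B : LieIdeal F L) : LieIdeal F L where
  carrier := {x : L | ∀ a ∈ A, ⁅x, a⁆ ∈ B}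
  zero_mem' := by intro a ha; simp [B.zero_mem]
  add_mem' := by intro x y hx hy a ha; rw [add_lie]; exact B.add_mem (hx a ha) (hy a ha)
  smul_mem' := by intro c x hx a ha; rw [smul_lie]; exact B.smul_mem c (hx a ha)
  lie_mem := by
    intro x m hm a ha
    show ⁅⁅x, m⁆, a⁆ ∈ B
    rw [lie_lie]
    exact B.sub_mem (B.lie_mem (hm a ha)) (hm _ (A.lie_mem ha))

/-- `A/Z` is a minimal ideal of `L/Z` (via the ideal correspondence). -/
def IsMinModIdeal (Z A : LieIdeal F L) : Prop :=
  Z < A ∧ ∀ B : LieIdeal F L, Z ≤ B → B ≤ A → B = Z ∨ B = A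

/-- `A` is a minimal ideal of `L`. -/
def IsMinimalIdeal (A : LieIdeal F L) : Prop := IsMinModIdeal ⊥ A

/-- An ideal `A` of `L` is quasi-minimal if `A² = A` and `A/Z(A)` is a minimal ideal
of `L/Z(A)`. -/
def IsQuasiMinimal (A : LieIdeal F L) : Prop :=
  ⁅A, A⁆ = A ∧ IsMinModIdeal (idealCenter A) A

end IdealDefs

section MoreDefs

variable (F : Type*) [Field F] (L : Type*) [LieRing L] [LieAlgebra F L]

/-- `E†(L)`: the subalgebra generated by the quasi-minimal components of `L`. -/
noncomputable def Edagger : LieSubalgebra F L :=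
  LieSubalgebra.lieSpan F L (⋃ A ∈ {A : LieIdeal F L | IsQuasiMinimal A}, (A : Set L))

/-- `N†(L) = N(L) + E†(L)`: the quasi-minimal radical of `L`. -/
noncomputable def Ndagger : LieSubalgebra F L :=
  LieIdeal.toLieSubalgebra F L (nilrad F L) ⊔ Edagger F L

/-- The generalised nilradical `N*(L)`: the ideal containing `N = N(L)` with
`N*(L)/N` the sum of all minimal ideals of `L/N` contained in `(N + C_L(N))/N`. -/
noncomputable def Nstar : LieIdeal F L :=
  nilrad F L ⊔ sSup {A : LieIdeal F L | IsMinModIdeal (nilrad F L) A ∧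
    A ≤ nilrad F L ⊔ centralizer (nilrad F L)}

/-- The Frattini ideal: the largest ideal contained in every maximal subalgebra. -/
def frattini : LieIdeal F L :=
  sSup {I : LieIdeal F L | ∀ M : LieSubalgebra F L, IsCoatom M → (I : Set L) ⊆ M}

/-- `Ñ(L)`: the ideal with `Ñ(L)/φ(L) = Soc (L/φ(L))`. -/
noncomputable def Ntilde : LieIdeal F L :=
  frattini F L ⊔ sSup {A : LieIdeal F L | IsMinModIdeal (frattini F L) A}

/-- A characteristic ideal: one invariant under all derivations. -/
def IsCharIdeal (J : LieIdeal F L) : Prop :=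
  ∀ D : LieDerivation F L L, ∀ x ∈ J, D x ∈ J

/-- The characteristic radical `R_c(L)`: the sum of all solvable characteristic ideals. -/
noncomputable def charRadical : LieIdeal F L :=
  sSup {J : LieIdeal F L | LieAlgebra.IsSolvable J ∧ IsCharIdeal F L J}

/-- A subideal: a subalgebra joined to `L` by a chain of successive ideals. -/
def IsSubideal (S : LieSubalgebra F L) : Prop :=
  ∃ n : ℕ, ∃ c : Fin (n + 1) → LieSubalgebra F L,
    c 0 = S ∧ c (Fin.last n) = ⊤ ∧
    ∀ i : Fin n, c i.castSucc ≤ c i.succ ∧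
      ∀ x ∈ c i.succ, ∀ y ∈ c i.castSucc, ⁅x, y⁆ ∈ c i.castSucc

end MoreDefs

end Paper

namespace LieSubalgebra

variable {R L : Type*} [CommRing R] [LieRing L] [LieAlgebra R L] {I : LieSubalgebra R L}

theorem apply_mem_of_le_span_lie
    (hperf : I.toSubmodule ≤ Submodule.span R {z | ∃ x ∈ I, ∃ y ∈ I, z = ⁅x, y⁆})
    (D : LieDerivation R L L) {S : LieSubalgebra R L} (hDS : ∀ x ∈ I, D x ∈ S)
    (hS : S ≤ I.normalizer) {x : L} (hx : x ∈ I) : D x ∈ I := by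
  refine Submodule.span_induction (p := fun z _ => D z ∈ I) ?_ (by simp) ?_ ?_ (hperf hx)
  · rintro _ ⟨a, ha, b, hb, rfl⟩
    rw [LieDerivation.apply_lie_eq_add]
    refine I.add_mem ?_ ((mem_normalizer_iff _ _).1 (hS (hDS a ha)) b hb)
    exact (mem_normalizer_iff' _ _).1 (hS (hDS b hb)) a ha
  · intro u v _ _ hu hv
    rw [map_add]
    exact I.add_mem hu hv
  · intro t u _ hu
    rw [map_smul]
    exact I.smul_mem t hu

theorem le_normalizer_of_le_span_lie
    (hperf : I.toSubmodule ≤ Submodule.span R {z | ∃ x ∈ I, ∃ y ∈ I, z = ⁅x, y⁆})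
    {J K : LieSubalgebra R L} (hIJ : I ≤ J) (hJ : J ≤ I.normalizer) (hK : K ≤ J.normalizer) :
    K ≤ I.normalizer := by
  intro x hx
  rw [mem_normalizer_iff]
  intro y hy
  have hxJ : ∀ a ∈ I, LieDerivation.ad R L x a ∈ J := fun a ha => by
    simpa using (mem_normalizer_iff _ _).1 (hK hx) a (hIJ ha)
  simpa using apply_mem_of_le_span_lie hperf _ hxJ hJ hy

end LieSubalgebra

namespace Paper

theorem IsSubideal.normalizer_eq_top {F L : Type*} [Field F] [LieRing L] [LieAlgebra F L]
    {I : LieSubalgebra F L} (hsub : IsSubideal F L I)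
    (hperf : I.toSubmodule ≤ Submodule.span F {z | ∃ x ∈ I, ∃ y ∈ I, z = ⁅x, y⁆}) :
    I.normalizer = ⊤ := by
  obtain ⟨n, c, hc0, hclast, hstep⟩ := hsub
  have hchain : ∀ i, I ≤ c i ∧ c i ≤ I.normalizer := by
    refine Fin.induction (by rw [hc0]; exact ⟨le_rfl, I.le_normalizer⟩) fun i ⟨hIc, hcN⟩ => ?_
    refine ⟨hIc.trans (hstep i).1, ?_⟩
    exact LieSubalgebra.le_normalizer_of_le_span_lie hperf hIc hcN fun x hx =>
      (LieSubalgebra.mem_normalizer_iff _ _).2 ((hstep i).2 x hx)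
  exact top_le_iff.1 (hclast ▸ (hchain (Fin.last n)).2)

theorem stmt_0_general (F : Type*) [Field F] (L : Type*) [LieRing L] [LieAlgebra F L]
    (I : LieSubalgebra F L)
    (hsub : IsSubideal F L I)
    (hperf : Submodule.span F {z : L | ∃ x ∈ I, ∃ y ∈ I, z = ⁅x, y⁆} = I.toSubmodule) :
    (∀ x : L, ∀ y ∈ I, ⁅x, y⁆ ∈ I) ∧ (∀ D : LieDerivation F L L, ∀ x ∈ I, D x ∈ I) := by
  have hnorm : I.normalizer = ⊤ := hsub.normalizer_eq_top hperf.ge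
  refine ⟨fun x => (LieSubalgebra.mem_normalizer_iff _ _).1 (hnorm ▸ trivial), fun D x hx => ?_⟩
  exact LieSubalgebra.apply_mem_of_le_span_lie hperf.ge D (S := ⊤) (fun _ _ => trivial) hnorm.ge hx

/-- A perfect subideal of a finite-dimensional Lie algebra is a characteristic ideal:
it is an ideal of `L` and is invariant under every derivation of `L`. -/
theorem stmt_0 (F : Type*) [Field F] (L : Type*) [LieRing L] [LieAlgebra F L]
    [FiniteDimensional F L] (I : LieSubalgebra F L)
    (hsub : IsSubideal F L I)
    (hperf : Submodule.span F {z : L | ∃ x ∈ I, ∃ y ∈ I, z = ⁅x, y⁆} = I.toSubmodule) :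
    (∀ x : L, ∀ y ∈ I, ⁅x, y⁆ ∈ I) ∧ (∀ D : LieDerivation F L L, ∀ x ∈ I, D x ∈ I) :=
  stmt_0_general F L I hsub hperf

end Paper
end

section
/- Let L be a finite-dimensional Lie algebra over any field and suppose A is an ideal of L with A² = A. Then Z(A) ⊆ φ(L). If moreover A is a quasi-minimal ideal of L, then Z(A) = A ∩ φ(L). -/
/-!
If a maximal subalgebra `M` missed `Z(A)`, then `L = M + Z(A)`; writing elements of `A` as
`m + z` with `m ∈ M ∩ A` and `z ∈ Z(A)`, their brackets are brackets of the `m`'s, so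
`A = A²` lies in `M`, and so does `Z(A) ⊆ A`. For the second part, `Z(A) ≤ A ∩ φ(L) ≤ A` and
quasi-minimality leave only `A ≤ φ(L)` to exclude: elements of `φ(L)` are ad-nilpotent, so by
Engel's theorem `A` would be a nilpotent, hence solvable, perfect ideal, i.e. `A = 0`.
-/

namespace Paper

open LieAlgebra

section Frattini

open LieAlgebra LieSubalgebra

variable {F : Type*} [Field F] {L : Type*} [LieRing L] [LieAlgebra F L]

def _root_.LieSubalgebra.addLieIdeal (K : LieSubalgebra F L) (I : LieIdeal F L) :
    LieSubalgebra F L where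
  toSubmodule := K.toSubmodule ⊔ I.toSubmodule
  lie_mem' {x y} hx hy := by
    obtain ⟨k, hk, i, hi, rfl⟩ := Submodule.mem_sup.mp hx
    obtain ⟨k', hk', i', hi', rfl⟩ := Submodule.mem_sup.mp hy
    have hI : ⁅k, i'⁆ + ⁅i, k' + i'⁆ ∈ I := add_mem (I.lie_mem hi') (lie_mem_left F L I _ _ hi)
    rw [add_lie, lie_add, add_assoc]
    exact Submodule.add_mem_sup (K.lie_mem hk hk') hI

lemma _root_.LieSubalgebra.mem_addLieIdeal {K : LieSubalgebra F L} {I : LieIdeal F L} {x : L} :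
    x ∈ K.addLieIdeal I ↔ ∃ k ∈ K, ∃ i ∈ I, k + i = x :=
  Submodule.mem_sup

lemma _root_.LieSubalgebra.le_addLieIdeal (K : LieSubalgebra F L) (I : LieIdeal F L) :
    K ≤ K.addLieIdeal I :=
  fun x hx => mem_addLieIdeal.mpr ⟨x, hx, 0, zero_mem _, add_zero x⟩

lemma idealCenter_le (A : LieIdeal F L) : idealCenter A ≤ A := fun _ hx => hx.1

/-- Modulo the centre of `A`, brackets of elements of `A` only see their `K`-components. -/
lemma subset_of_subset_addLieIdeal_idealCenter {K : LieSubalgebra F L} {A : LieIdeal F L}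
    (hA : ⁅A, A⁆ = A) (h : (A : Set L) ⊆ K.addLieIdeal (idealCenter A)) : (A : Set L) ⊆ K := by
  have hdecomp : ∀ a ∈ A, ∃ k ∈ K, k ∈ A ∧ ∃ z ∈ idealCenter A, k + z = a := by
    intro a ha
    obtain ⟨k, hk, z, hz, rfl⟩ := mem_addLieIdeal.mp (h ha)
    exact ⟨k, hk, by simpa using A.sub_mem ha hz.1, z, hz, rfl⟩
  suffices (⁅A, A⁆ : LieIdeal F L).toSubmodule ≤ K.toSubmodule by rwa [hA] at this
  rw [LieSubmodule.lieIdeal_oper_eq_linear_span', Submodule.span_le]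
  rintro _ ⟨a, ha, b, hb, rfl⟩
  obtain ⟨k, hkK, hkA, z, hz, rfl⟩ := hdecomp a ha
  obtain ⟨k', hk'K, hk'A, z', hz', rfl⟩ := hdecomp b hb
  have hbracket : ⁅k + z, k' + z'⁆ = ⁅k, k'⁆ := by
    rw [add_lie, lie_add, lie_add, hz.2 k' hk'A, hz.2 z' hz'.1, ← lie_skew k z',
      hz'.2 k hkA]
    simp
  rw [hbracket]
  exact K.lie_mem hkK hk'K

lemma idealCenter_subset_of_isCoatom {A : LieIdeal F L} (hA : ⁅A, A⁆ = A)
    {M : LieSubalgebra F L} (hM : IsCoatom M) : (idealCenter A : Set L) ⊆ M := by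
  rcases hM.le_iff.mp (M.le_addLieIdeal (idealCenter A)) with htop | heq
  · have hAM := subset_of_subset_addLieIdeal_idealCenter hA (fun x _ => htop ▸ mem_top x)
    exact fun z hz => hAM (idealCenter_le A hz)
  · intro z hz
    exact heq ▸ mem_addLieIdeal.mpr ⟨0, zero_mem M, z, hz, zero_add z⟩

lemma le_frattini_of_forall_isCoatom {I : LieIdeal F L}
    (h : ∀ M : LieSubalgebra F L, IsCoatom M → (I : Set L) ⊆ M) : I ≤ frattini F L :=
  le_sSup h

lemma frattini_subset_of_isCoatom {M : LieSubalgebra F L} (hM : IsCoatom M) :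
    (frattini F L : Set L) ⊆ M := by
  show (frattini F L).toSubmodule ≤ M.toSubmodule
  rw [frattini, LieSubmodule.sSup_toSubmodule]
  exact sSup_le fun _ ⟨I, hI, hIp⟩ => hIp ▸ hI M hM

lemma ad_pow_succ_apply_mem {I : LieIdeal F L} {a : L} (ha : a ∈ I) (n : ℕ) (y : L) :
    (ad F L a ^ (n + 1)) y ∈ I := by
  rw [pow_succ', Module.End.mul_apply, ad_apply]
  exact lie_mem_left F L I _ _ ha

/-- Fitting's decomposition of `ad a` puts `L` inside `engel F a + φ(L)`, so the Engel
subalgebra of a non-ad-nilpotent `a ∈ φ(L)` would lie in no maximal subalgebra. -/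
lemma isNilpotent_ad_of_mem_frattini [FiniteDimensional F L] {a : L}
    (ha : a ∈ frattini F L) : IsNilpotent (ad F L a) := by
  by_contra hnil
  have hengel : engel F a ≠ ⊤ := fun h => hnil <|
    ((LinearMap.charpoly_nilpotent_tfae (ad F L a)).out 0 2).mpr fun y =>
      (mem_engel_iff F a y).mp (h ▸ mem_top y)
  obtain ⟨M, hM, hEM⟩ := (eq_top_or_exists_le_coatom (engel F a)).resolve_left hengel
  obtain ⟨N, hN⟩ := Filter.eventually_atTop.mp (ad F L a).eventually_isCompl_ker_pow_range_pow
  refine hM.1 (eq_top_iff.mpr fun x _ => ?_)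
  have hx : x ∈ LinearMap.ker (ad F L a ^ (N + 1)) ⊔ LinearMap.range (ad F L a ^ (N + 1)) := by
    rw [(hN (N + 1) N.le_succ).sup_eq_top]; trivial
  obtain ⟨u, hu, _, ⟨y, rfl⟩, rfl⟩ := Submodule.mem_sup.mp hx
  exact M.add_mem (hEM ((mem_engel_iff F a u).mpr ⟨N + 1, hu⟩))
    (frattini_subset_of_isCoatom hM (ad_pow_succ_apply_mem ha N y))

lemma _root_.LieIdeal.eq_bot_of_isSolvable_of_lie_self {A : LieIdeal F L} [IsSolvable A]
    (hA : ⁅A, A⁆ = A) : A = ⊥ := by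
  obtain ⟨k, hk⟩ := IsSolvable.solvable F A
  rwa [LieIdeal.derivedSeries_eq_bot_iff, derivedSeriesOfIdeal,
    Function.iterate_fixed (f := fun I : LieIdeal F L => ⁅I, I⁆) hA] at hk

lemma eq_bot_of_le_frattini [FiniteDimensional F L] {A : LieIdeal F L} (hA : ⁅A, A⁆ = A)
    (h : A ≤ frattini F L) : A = ⊥ := by
  have : LieRing.IsNilpotent A := (isNilpotent_iff_forall (R := F) (L := A)).mpr fun x =>
    A.toLieSubalgebra.isNilpotent_ad_of_isNilpotent_ad (isNilpotent_ad_of_mem_frattini (h x.2))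
  exact LieIdeal.eq_bot_of_isSolvable_of_lie_self hA

end Frattini

/-- If `A` is a perfect ideal then `Z(A) ⊆ φ(L)`; if moreover `A` is quasi-minimal then
`Z(A) = A ∩ φ(L)`. -/
theorem stmt_7 (F : Type*) [Field F] (L : Type*) [LieRing L] [LieAlgebra F L]
    [FiniteDimensional F L] (A : LieIdeal F L) (hperf : ⁅A, A⁆ = A) :
    idealCenter A ≤ frattini F L ∧
      (IsQuasiMinimal A → idealCenter A = A ⊓ frattini F L) := by
  have hZ : idealCenter A ≤ frattini F L :=
    le_frattini_of_forall_isCoatom fun _ hM => idealCenter_subset_of_isCoatom hperf hM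
  refine ⟨hZ, fun ⟨_, hlt, hmin⟩ => ?_⟩
  rcases hmin (A ⊓ frattini F L) (le_inf (idealCenter_le A) hZ) inf_le_left with h | h
  · exact h.symm
  · have hA : A = ⊥ := eq_bot_of_le_frattini hperf (inf_eq_left.mp h)
    exact absurd (hA ▸ hlt) not_lt_bot

end Paper
end

section
/- Let L be a finite-dimensional Lie algebra over any field F, with nilradical N = N(L). Then C_L(Ñ(L)) ⊆ Z(N) ⊆ Ñ(L). -/
/-!
Write `φ` for the Frattini ideal. If `A ⊇ φ` is an ideal with `[A, A] ⊆ φ`, a subalgebra `U`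
minimal with `φ ⊆ U` and `A + U = L` satisfies `A ∩ U = φ`: the ideal `A ∩ U` lies in every
maximal subalgebra. Splitting off in this way a minimal ideal `A/φ` of `L/φ` from an ideal
`B ⊇ φ` with `[B ∩ Ñ, B] ⊆ φ` leaves the smaller ideal `B ∩ U` of the same kind, so by induction
every such `B` lies in `Ñ`. Nilpotent ideals `I` satisfy `[I, I] ⊆ φ`, and `C = C_L(Ñ)` satisfies
`[(C + φ) ∩ Ñ, C + φ] ⊆ φ`; hence `N ⊆ Ñ` and `C ⊆ Ñ`. Then `C` is abelian, so `C ⊆ N`, and it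
centralises `N ⊆ Ñ`.
-/

section General

variable {R L : Type*} [CommRing R] [LieRing L] [LieAlgebra R L]

instance LieSubalgebra.wellFoundedLT_of_isArtinian [IsArtinian R L] :
    WellFoundedLT (LieSubalgebra R L) :=
  RelHomClass.isWellFounded (⟨LieSubalgebra.toSubmodule, fun h ↦ h⟩ : _ →r (· < ·))

def LieSubalgebra.supLieIdeal (M : LieSubalgebra R L) (I : LieIdeal R L) : LieSubalgebra R L :=
  { I.toSubmodule ⊔ M.toSubmodule with
    lie_mem' := by
      intro x y hx hy
      obtain ⟨i, hi, m, hm, rfl⟩ := Submodule.mem_sup.mp hx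
      obtain ⟨i', hi', m', hm', rfl⟩ := Submodule.mem_sup.mp hy
      have e : ⁅i + m, i' + m'⁆ = (⁅i, i' + m'⁆ + ⁅m, i'⁆) + ⁅m, m'⁆ := by
        simp only [add_lie, lie_add]; abel
      rw [e]
      exact Submodule.add_mem_sup (add_mem (lie_mem_left R L I _ _ hi) (I.lie_mem hi'))
        (M.lie_mem hm hm') }

theorem LieIdeal.sup_eq_top_of_isCoatom {I : LieIdeal R L} {M : LieSubalgebra R L}
    (hM : IsCoatom M) (h : ¬ I.toSubmodule ≤ M.toSubmodule) :
    I.toSubmodule ⊔ M.toSubmodule = ⊤ :=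
  (LieSubalgebra.toSubmodule_eq_top _).mpr <| hM.2 (M.supLieIdeal I) <|
    lt_of_le_not_ge (fun _ hx ↦ Submodule.mem_sup_right hx)
      (fun hle ↦ h fun _ hx ↦ hle (Submodule.mem_sup_left hx))

def LieIdeal.infOfSupplement (B A : LieIdeal R L) (U : LieSubalgebra R L)
    (hAU : A.toSubmodule ⊔ U.toSubmodule = ⊤) (hAB : ∀ a ∈ A, ∀ b ∈ B, ⁅a, b⁆ ∈ U) :
    LieIdeal R L :=
  { B.toSubmodule ⊓ U.toSubmodule with
    lie_mem := by
      intro x m hm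
      obtain ⟨a, ha, u, hu, rfl⟩ := Submodule.mem_sup.mp (hAU ▸ Submodule.mem_top : x ∈ _)
      rw [add_lie]
      exact add_mem
        (show _ ∈ B.toSubmodule ⊓ U.toSubmodule from ⟨B.lie_mem hm.1, hAB a ha m hm.1⟩)
        ⟨B.lie_mem hm.1, U.lie_mem hu hm.2⟩ }

theorem LieSubalgebra.eq_top_of_sup_lowerCentralSeries_one_eq_top [LieRing.IsNilpotent L]
    {S : LieSubalgebra R L}
    (h : S.toSubmodule ⊔ (LieModule.lowerCentralSeries R L L 1).toSubmodule = ⊤) : S = ⊤ := by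
  have hsup : ∀ k,
      S.toSubmodule ⊔ (LieModule.lowerCentralSeries R L L (k + 1)).toSubmodule = ⊤ := by
    intro k
    induction k with
    | zero => exact h
    | succ k ih =>
      refine eq_top_iff.mpr (h.symm.le.trans (sup_le le_sup_left ?_))
      rw [LieModule.lowerCentralSeries_succ, LieSubmodule.lieIdeal_oper_eq_linear_span']
      refine Submodule.span_le.mpr ?_
      rintro _ ⟨x, -, y, -, rfl⟩
      obtain ⟨s, hs, p, hp, rfl⟩ := Submodule.mem_sup.mp (ih ▸ Submodule.mem_top : x ∈ _)
      obtain ⟨s', hs', p', hp', rfl⟩ := Submodule.mem_sup.mp (ih ▸ Submodule.mem_top : y ∈ _)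
      have e : ⁅s + p, s' + p'⁆ = ⁅s, s'⁆ + (⁅s + p, p'⁆ - ⁅s', p⁆) := by
        rw [← lie_skew s' p]; simp only [add_lie, lie_add]; abel
      rw [e]
      refine Submodule.add_mem_sup (S.lie_mem hs hs') (sub_mem ?_ ?_) <;>
        rw [LieModule.lowerCentralSeries_succ] <;>
        exact LieSubmodule.lie_mem_lie (LieSubmodule.mem_top _) ‹_›
  obtain ⟨n, hn⟩ := LieModule.IsNilpotent.nilpotent R L L
  have hbot : LieModule.lowerCentralSeries R L L (n + 1) = ⊥ :=
    _root_.eq_bot_iff.mpr ((LieModule.antitone_lowerCentralSeries R L L n.le_succ).trans hn.le)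
  simpa only [hbot, LieSubmodule.bot_toSubmodule, sup_bot_eq, LieSubalgebra.toSubmodule_eq_top]
    using hsup n

theorem LieIdeal.lie_self_le_of_isCoatom {I : LieIdeal R L} [LieRing.IsNilpotent I]
    {M : LieSubalgebra R L} (hM : IsCoatom M) :
    (⁅I, I⁆ : LieIdeal R L).toSubmodule ≤ M.toSubmodule := by
  by_contra h
  have htop := LieIdeal.sup_eq_top_of_isCoatom hM h
  have hlcs : LieModule.lowerCentralSeries R I I 1 = LieIdeal.comap I.incl ⁅I, I⁆ := by
    rw [← LieIdeal.comap_bracket_incl_of_le I le_rfl le_rfl, LieIdeal.comap_incl_self]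
    rfl
  suffices hS : M.comap I.incl = ⊤ from
    h fun x hx ↦ (hS ▸ LieSubalgebra.mem_top (⟨x, LieSubmodule.lie_le_left I I hx⟩ : I) :)
  refine LieSubalgebra.eq_top_of_sup_lowerCentralSeries_one_eq_top (eq_top_iff.mpr fun x _ ↦ ?_)
  obtain ⟨c, hc, m, hm, hcm⟩ := Submodule.mem_sup.mp (htop ▸ Submodule.mem_top : (x : L) ∈ _)
  have hcI : c ∈ I := LieSubmodule.lie_le_left I I hc
  have hmI : m ∈ I := by rw [eq_sub_of_add_eq' hcm]; exact sub_mem x.2 hcI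
  rw [show x = ⟨m, hmI⟩ + ⟨c, hcI⟩ from Subtype.ext (by simp [← hcm, add_comm]), hlcs]
  exact Submodule.add_mem_sup hm hc

end General

namespace Paper

section

variable {F : Type*} [Field F] {L : Type*} [LieRing L] [LieAlgebra F L]

theorem le_frattini_iff {J : LieIdeal F L} :
    J ≤ frattini F L ↔ ∀ M : LieSubalgebra F L, IsCoatom M → J.toSubmodule ≤ M.toSubmodule := by
  refine ⟨fun hJ M hM ↦ le_trans hJ ?_, fun hJ ↦ le_sSup hJ⟩
  rw [frattini, LieSubmodule.sSup_toSubmodule]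
  exact sSup_le fun _ ⟨I, hI, hIJ⟩ ↦ hIJ ▸ hI M hM

theorem lie_self_le_frattini {I : LieIdeal F L} [LieRing.IsNilpotent I] :
    ⁅I, I⁆ ≤ frattini F L :=
  le_frattini_iff.mpr fun _ hM ↦ LieIdeal.lie_self_le_of_isCoatom hM

theorem frattini_le_Ntilde : frattini F L ≤ Ntilde F L := le_sup_left

theorem le_Ntilde_of_isMinModIdeal {A : LieIdeal F L} (hA : IsMinModIdeal (frattini F L) A) :
    A ≤ Ntilde F L :=
  le_sup_of_le_right (le_sSup hA)

theorem lie_centralizer_eq_bot (I : LieIdeal F L) : ⁅I, centralizer I⁆ = ⊥ := by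
  rw [LieSubmodule.lie_comm, LieSubmodule.lie_eq_bot_iff]
  exact fun _ hx y hy ↦ hx y hy

section FiniteDimensional

variable [FiniteDimensional F L]

attribute [local instance] LieSubmodule.wellFoundedLT_of_isArtinian

theorem exists_isMinModIdeal_le {Z B : LieIdeal F L} (h : Z < B) :
    ∃ A, IsMinModIdeal Z A ∧ A ≤ B := by
  obtain ⟨A, ⟨hZA, hAB⟩, hmin⟩ := wellFounded_lt.has_min {A | Z < A ∧ A ≤ B} ⟨B, h, le_rfl⟩
  refine ⟨A, ⟨hZA, fun C hZC hCA ↦ ?_⟩, hAB⟩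
  rcases hZC.eq_or_lt with rfl | hZC
  · exact Or.inl rfl
  · exact Or.inr (hCA.eq_of_not_lt (hmin C ⟨hZC, hCA.trans hAB⟩))

theorem exists_supplement_inf_eq_frattini {A : LieIdeal F L} (hφA : frattini F L ≤ A)
    (hA : ⁅A, A⁆ ≤ frattini F L) :
    ∃ U : LieSubalgebra F L, A.toSubmodule ⊔ U.toSubmodule = ⊤ ∧
      A.toSubmodule ⊓ U.toSubmodule = (frattini F L).toSubmodule := by
  obtain ⟨U, ⟨hφU, hAU⟩, hmin⟩ := wellFounded_lt.has_min
    {U : LieSubalgebra F L | (frattini F L).toSubmodule ≤ U.toSubmodule ∧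
      A.toSubmodule ⊔ U.toSubmodule = ⊤} ⟨⊤, le_top, sup_top_eq _⟩
  refine ⟨U, hAU, le_antisymm ?_ (le_inf hφA hφU)⟩
  let J := A.infOfSupplement A U hAU fun a ha b hb ↦ hφU (hA (LieSubmodule.lie_mem_lie ha hb))
  refine (le_frattini_iff (J := J)).mpr fun M hM ↦ ?_
  by_contra hJM
  have hJU : J.toSubmodule ≤ U.toSubmodule := inf_le_right
  -- `U ∩ M` would be a smaller supplement, since `U = J + U ∩ M`.
  have hU : U.toSubmodule ≤ J.toSubmodule ⊔ (U ⊓ M).toSubmodule := by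
    rw [LieSubalgebra.inf_toSubmodule, inf_comm, ← sup_inf_assoc_of_le _ hJU,
      LieIdeal.sup_eq_top_of_isCoatom hM hJM, top_inf_eq]
  refine hmin (U ⊓ M) ⟨?_, ?_⟩ (lt_of_le_of_ne inf_le_left fun hUM ↦ hJM ?_)
  · rw [LieSubalgebra.inf_toSubmodule]
    exact le_inf hφU ((le_frattini_iff.mp le_rfl) M hM)
  · refine eq_top_iff.mpr (hAU.symm.le.trans (sup_le le_sup_left (hU.trans ?_)))
    exact sup_le (inf_le_left.trans le_sup_left) le_sup_right
  · exact hJU.trans (hUM ▸ inf_le_right)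

theorem le_Ntilde_of_lie_inf_Ntilde_le_frattini {B : LieIdeal F L} (hφB : frattini F L ≤ B)
    (hB : ⁅B ⊓ Ntilde F L, B⁆ ≤ frattini F L) : B ≤ Ntilde F L := by
  induction B using WellFoundedLT.induction with
  | _ B ih =>
  by_cases hBφ : B ≤ frattini F L
  · exact hBφ.trans frattini_le_Ntilde
  obtain ⟨A, hA, hAB⟩ := exists_isMinModIdeal_le (lt_of_le_not_ge hφB hBφ)
  have hAN := le_Ntilde_of_isMinModIdeal hA
  have hlieAB : ⁅A, B⁆ ≤ frattini F L :=
    (LieSubmodule.mono_lie_left B (le_inf hAB hAN)).trans hB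
  obtain ⟨U, hAU, hAUφ⟩ := exists_supplement_inf_eq_frattini hA.1.le
    ((LieSubmodule.mono_lie_right A hAB).trans hlieAB)
  have hφU : (frattini F L).toSubmodule ≤ U.toSubmodule := hAUφ ▸ inf_le_right
  let D := B.infOfSupplement A U hAU fun a ha b hb ↦ hφU (hlieAB (LieSubmodule.lie_mem_lie ha hb))
  have hDB : D ≤ B := fun _ hx ↦ hx.1
  have hBAD : B.toSubmodule = A.toSubmodule ⊔ D.toSubmodule :=
    calc B.toSubmodule = (A.toSubmodule ⊔ U.toSubmodule) ⊓ B.toSubmodule := by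
          rw [hAU, top_inf_eq]
      _ = A.toSubmodule ⊔ B.toSubmodule ⊓ U.toSubmodule := by
          rw [sup_inf_assoc_of_le _ (show A.toSubmodule ≤ B.toSubmodule from hAB), inf_comm]
  have hDN : D ≤ Ntilde F L := by
    refine ih D (lt_of_le_of_ne hDB fun hDB ↦ ?_) (fun _ hx ↦ ⟨hφB hx, hφU hx⟩)
      ((LieSubmodule.mono_lie (inf_le_inf_right _ hDB) hDB).trans hB)
    -- `D = B` would give `A ≤ B ≤ U`, so `A ≤ A ∩ U = φ`
    refine hA.1.not_ge fun x hx ↦ ?_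
    rw [← LieSubmodule.mem_toSubmodule, ← hAUφ]
    exact ⟨hx, (hDB ▸ hAB hx : x ∈ D).2⟩
  rw [← LieSubmodule.toSubmodule_le_toSubmodule, hBAD, ← LieSubmodule.sup_toSubmodule,
    LieSubmodule.toSubmodule_le_toSubmodule]
  exact sup_le hAN hDN

theorem nilrad_le_Ntilde : nilrad F L ≤ Ntilde F L := by
  refine sSup_le fun I hI ↦ ?_
  have : LieRing.IsNilpotent I := hI
  refine le_sup_left.trans (le_Ntilde_of_lie_inf_Ntilde_le_frattini le_sup_right ?_)
  refine (LieSubmodule.mono_lie_left _ inf_le_left).trans ?_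
  rw [LieSubmodule.sup_lie, LieSubmodule.lie_sup]
  exact sup_le (sup_le lie_self_le_frattini (LieSubmodule.lie_le_right _ _))
    (LieSubmodule.lie_le_left _ _)

theorem centralizer_Ntilde_le_Ntilde : centralizer (Ntilde F L) ≤ Ntilde F L := by
  refine le_sup_left.trans (le_Ntilde_of_lie_inf_Ntilde_le_frattini le_sup_right ?_)
  have hC : ⁅(centralizer (Ntilde F L) ⊔ frattini F L) ⊓ Ntilde F L,
      centralizer (Ntilde F L)⁆ = ⊥ :=
    le_bot_iff.mp <| (LieSubmodule.mono_lie_left _ inf_le_right).trans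
      (lie_centralizer_eq_bot _).le
  rw [LieSubmodule.lie_sup, hC, bot_sup_eq]
  exact LieSubmodule.lie_le_right _ _

theorem centralizer_Ntilde_le_nilrad : centralizer (Ntilde F L) ≤ nilrad F L := by
  have : IsLieAbelian (centralizer (Ntilde F L)) :=
    ⟨fun x y ↦ Subtype.ext (x.2 y (centralizer_Ntilde_le_Ntilde y.2))⟩
  exact le_sSup (inferInstance : LieRing.IsNilpotent (centralizer (Ntilde F L)))

end FiniteDimensional

end

/-- `C_L(Ñ(L)) ⊆ Z(N) ⊆ Ñ(L)`. -/
theorem stmt_17 (F : Type*) [Field F] (L : Type*) [LieRing L] [LieAlgebra F L]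
    [FiniteDimensional F L] :
    centralizer (Ntilde F L) ≤ idealCenter (nilrad F L) ∧
      idealCenter (nilrad F L) ≤ Ntilde F L :=
  ⟨fun _ hx ↦ ⟨centralizer_Ntilde_le_nilrad hx, fun y hy ↦ hx y (nilrad_le_Ntilde hy)⟩,
    fun _ hx ↦ nilrad_le_Ntilde hx.1⟩

end Paper
end
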